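/- arXiv:2510.02695 — 2 statements merged into one kernel-verified Lean document; each statement's English description precedes it below -/
import Mathlib

section
/- Let β and π be probability measures on a measurable space, with β absolutely continuous with respect to π. Let I be the support set of β (a measurable set with β(I) = 1) and O its complement. Then π(O) ≤ 1 − exp(−D_KL(β ‖ π)). -/
open MeasureTheory

/-- KL divergence as the integral of the log Radon–Nikodym derivative. -/
noncomputable def klDiv' {Ω : Type*} [MeasurableSpace Ω] (β π : Measure Ω) : ℝ :=
  ∫ ω, Real.log ((β.rnDeriv π ω).toReal) ∂β

theorem kl_fence {Ω : Type*} [MeasurableSpace Ω] (β π : Measure Ω)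
    [IsProbabilityMeasure β] [IsProbabilityMeasure π]
    (hac : β ≪ π) (I : Set Ω) (hI : MeasurableSet I) (hβI : β I = 1)
    (hdens : ∀ ω ∉ I, β.rnDeriv π ω = 0)
    (hint : Integrable (fun ω => Real.log ((β.rnDeriv π ω).toReal)) β) :
    (π Iᶜ).toReal ≤ 1 - Real.exp (-(klDiv' β π)) := by
  set f := β.rnDeriv π with hf
  set g : Ω → ℝ := fun ω => Real.log ((f ω).toReal) with hg
  have hfmeas : Measurable f := Measure.measurable_rnDeriv β π
  have hgmeas : Measurable fun ω => Real.exp (-(g ω)) :=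
    (hfmeas.ennreal_toReal.log.neg).exp
  -- key lintegral bound
  have hkey : ∫⁻ ω, ENNReal.ofReal (Real.exp (-(g ω))) ∂β ≤ π I := by
    have hβ : β = π.withDensity f := (Measure.withDensity_rnDeriv_eq β π hac).symm
    rw [hβ, lintegral_withDensity_eq_lintegral_mul _ hfmeas
      hgmeas.ennreal_ofReal]
    have hbound : ∀ᵐ ω ∂π,
        (fun ω => f ω * ENNReal.ofReal (Real.exp (-(g ω)))) ω ≤ I.indicator 1 ω := by
      filter_upwards [Measure.rnDeriv_lt_top β π] with ω hlt
      by_cases hωI : ω ∈ I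
      · simp only [Set.indicator_of_mem hωI, Pi.one_apply]
        by_cases h0 : f ω = 0
        · simp [h0]
        · have htpos : 0 < (f ω).toReal := ENNReal.toReal_pos h0 hlt.ne
          have : Real.exp (-(g ω)) = ((f ω).toReal)⁻¹ := by
            rw [hg, ← Real.log_inv, Real.exp_log (by positivity)]
          rw [this, ENNReal.ofReal_inv_of_pos htpos, ENNReal.ofReal_toReal hlt.ne,
            ENNReal.mul_inv_cancel h0 hlt.ne]
      · simp [Set.indicator_of_notMem hωI, hdens ω hωI]
    calc ∫⁻ ω, f ω * ENNReal.ofReal (Real.exp (-(g ω))) ∂π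
        ≤ ∫⁻ ω, I.indicator 1 ω ∂π := lintegral_mono_ae hbound
      _ = π I := by simp [lintegral_indicator, hI]
  -- integrability of exp(-g)
  have hexp_int : Integrable (fun ω => Real.exp (-(g ω))) β := by
    refine ⟨hgmeas.aestronglyMeasurable, ?_⟩
    rw [hasFiniteIntegral_iff_ofReal (Filter.Eventually.of_forall fun ω => (Real.exp_pos _).le)]
    exact lt_of_le_of_lt hkey (lt_of_le_of_lt prob_le_one ENNReal.one_lt_top)
  -- integral bound
  have hint_le : ∫ ω, Real.exp (-(g ω)) ∂β ≤ (π I).toReal := by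
    rw [integral_eq_lintegral_of_nonneg_ae
      (Filter.Eventually.of_forall fun ω => (Real.exp_pos _).le) hgmeas.aestronglyMeasurable]
    exact ENNReal.toReal_mono (measure_ne_top π I) hkey
  -- Jensen
  have hjensen : Real.exp (∫ ω, -(g ω) ∂β) ≤ ∫ ω, Real.exp (-(g ω)) ∂β := by
    have := convexOn_exp.map_integral_le (f := fun ω => -(g ω)) (μ := β)
      Real.continuous_exp.continuousOn isClosed_univ
      (Filter.Eventually.of_forall fun ω => Set.mem_univ _) hint.neg hexp_int
    simpa using this
  have hKL : ∫ ω, -(g ω) ∂β = -(klDiv' β π) := by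
    rw [integral_neg]; rfl
  rw [hKL] at hjensen
  have h1 : Real.exp (-(klDiv' β π)) ≤ (π I).toReal := hjensen.trans hint_le
  have h2 : (π Iᶜ).toReal = 1 - (π I).toReal := by
    rw [prob_compl_eq_one_sub hI, ENNReal.toReal_sub_of_le prob_le_one ENNReal.one_ne_top]
    simp
  rw [h2]
  linarith
end

section
/- Let X be an integrable real random variable with continuous strictly increasing CDF F. For α ∈ (0,1], the quantity (1/α)∫₀^α F⁻¹(τ) dτ equals the infimum of E_q[X] over all probability measures q absolutely continuous with respect to the law P of X whose density dq/dP takes values in [0, 1/α]. -/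
open MeasureTheory

/-- Generalized inverse CDF (quantile function) of the random variable `X` under `μ`. -/
noncomputable def quantile {Ω : Type*} [MeasurableSpace Ω] (μ : Measure Ω)
    (X : Ω → ℝ) (τ : ℝ) : ℝ :=
  sInf {x : ℝ | τ ≤ (μ {ω | X ω ≤ x}).toReal}

/-!
The probability integral transform `F(X)` is uniform on `(0, 1)` and `F⁻¹ ∘ F = id`, so
`∫₀^α F⁻¹ = E[X; F(X) ≤ α]`. For `α < 1` pick `c` with `F c = α`; the density
`g₀ = α⁻¹ 𝟙{X ≤ c}` is admissible, and every admissible `g` satisfies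
`(g - g₀)(X - c) ≥ 0` pointwise, which integrates to `E[g X] ≥ E[g₀ X]` because
`E[g] = E[g₀]`. For `α = 1` the only admissible density is `g = 1` a.e.
-/

open Set ProbabilityTheory

theorem StrictMono.csInf_setOf_apply_le {α β : Type*} [ConditionallyCompleteLinearOrder α]
    [Preorder β] {f : α → β} (hf : StrictMono f) (b : α) : sInf {x | f b ≤ f x} = b := by
  simp_rw [hf.le_iff_le]
  exact csInf_Ici

section Law

variable {Ω : Type*} [MeasurableSpace Ω] {μ : Measure Ω} [IsProbabilityMeasure μ] {X : Ω → ℝ}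

theorem cdf_map_eq_toReal (hX : AEMeasurable X μ) (x : ℝ) :
    cdf (μ.map X) x = (μ {ω | X ω ≤ x}).toReal := by
  have := Measure.isProbabilityMeasure_map hX
  rw [cdf_eq_real, measureReal_def, Measure.map_apply_of_aemeasurable hX measurableSet_Iic]
  rfl

theorem quantile_eq_sInf_cdf (hX : AEMeasurable X μ) (τ : ℝ) :
    quantile μ X τ = sInf {x | τ ≤ cdf (μ.map X) x} := by
  simp_rw [quantile, cdf_map_eq_toReal hX]

end Law

section ProbabilityIntegralTransform

variable {ν : Measure ℝ}

theorem cdf_pos_of_strictMono (hs : StrictMono (cdf ν)) (x : ℝ) : 0 < cdf ν x :=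
  (cdf_nonneg ν (x - 1)).trans_lt (hs (sub_one_lt x))

theorem cdf_lt_one_of_strictMono (hs : StrictMono (cdf ν)) (x : ℝ) : cdf ν x < 1 :=
  (hs (lt_add_one x)).trans_le (cdf_le_one ν _)

theorem exists_cdf_eq_of_continuous [IsProbabilityMeasure ν] (hc : Continuous (cdf ν)) {τ : ℝ} (hτ : τ ∈ Ioo 0 1) :
    ∃ x, cdf ν x = τ :=
  mem_range_of_exists_le_of_exists_ge hc
    ((tendsto_cdf_atBot ν).eventually_le_const hτ.1).exists
    ((tendsto_cdf_atTop ν).eventually_const_le hτ.2).exists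

theorem map_cdf_eq_volume_restrict [IsProbabilityMeasure ν] (hc : Continuous (cdf ν)) (hs : StrictMono (cdf ν)) :
    ν.map (cdf ν) = volume.restrict (Ioc 0 1) := by
  refine Measure.ext_of_Iic _ _ fun t => ?_
  rw [Measure.map_apply hc.measurable measurableSet_Iic,
    Measure.restrict_apply measurableSet_Iic]
  rcases le_or_gt t 0 with ht0 | ht0
  · have hpre : cdf ν ⁻¹' Iic t = ∅ :=
      eq_empty_of_forall_notMem fun x hx => (ht0.trans_lt (cdf_pos_of_strictMono hs x)).not_ge hx
    rw [hpre, Iic_inter_Ioc_of_le (ht0.trans zero_le_one), Real.volume_Ioc,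
      ENNReal.ofReal_of_nonpos (by linarith), measure_empty]
  rcases lt_or_ge t 1 with ht1 | ht1
  · obtain ⟨c, rfl⟩ := exists_cdf_eq_of_continuous hc ⟨ht0, ht1⟩
    have hpre : cdf ν ⁻¹' Iic (cdf ν c) = Iic c := by
      ext x
      exact hs.le_iff_le
    rw [hpre, Iic_inter_Ioc_of_le ht1.le, Real.volume_Ioc, sub_zero, ofReal_cdf]
  · have hpre : cdf ν ⁻¹' Iic t = univ :=
      eq_univ_of_forall fun x => (cdf_le_one ν x).trans ht1
    rw [hpre, inter_eq_right.mpr (Ioc_subset_Iic_self.trans (Iic_subset_Iic.mpr ht1)),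
      measure_univ, Real.volume_Ioc, sub_zero, ENNReal.ofReal_one]

theorem setIntegral_Ioc_sInf_cdf [IsProbabilityMeasure ν] (hc : Continuous (cdf ν)) (hs : StrictMono (cdf ν)) {α : ℝ}
    (hα : α ≤ 1) :
    ∫ τ in Ioc 0 α, sInf {x | τ ≤ cdf ν x} = ∫ x in {x | cdf ν x ≤ α}, x ∂ν := by
  have hrestrict : volume.restrict (Ioc 0 α) = (ν.map (cdf ν)).restrict (Ioc 0 α) := by
    rw [map_cdf_eq_volume_restrict hc hs, Measure.restrict_restrict measurableSet_Ioc,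
      inter_eq_left.mpr (Ioc_subset_Ioc_right hα)]
  have hpre : cdf ν ⁻¹' Ioc 0 α = {x | cdf ν x ≤ α} := by
    ext x
    exact and_iff_right (cdf_pos_of_strictMono hs x)
  rw [hrestrict, (hc.measurable.measurableEmbedding hs.injective).setIntegral_map, hpre]
  simp_rw [hs.csInf_setOf_apply_le]

end ProbabilityIntegralTransform

theorem setIntegral_Ioc_quantile {Ω : Type*} [MeasurableSpace Ω] {μ : Measure Ω}
    [IsProbabilityMeasure μ] {X : Ω → ℝ} (hX : Measurable X)
    (hc : Continuous (cdf (μ.map X))) (hs : StrictMono (cdf (μ.map X))) {α : ℝ} (hα : α ≤ 1) :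
    ∫ τ in Ioc 0 α, quantile μ X τ = ∫ ω in X ⁻¹' {x | cdf (μ.map X) x ≤ α}, X ω ∂μ := by
  have := Measure.isProbabilityMeasure_map (μ := μ) hX.aemeasurable
  simp_rw [quantile_eq_sInf_cdf hX.aemeasurable]
  rw [setIntegral_Ioc_sInf_cdf hc hs hα]
  exact setIntegral_map (measurableSet_le hc.measurable measurable_const)
    aestronglyMeasurable_id hX.aemeasurable

section Dual

variable {Ω : Type*} [MeasurableSpace Ω] {μ : Measure Ω} {X : Ω → ℝ}

/-- The values `E[g X]` over the densities `g = dq/dμ` of probability measures `q` with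
`0 ≤ g ≤ 1/α`. -/
def cvarDualSet (μ : Measure Ω) (X : Ω → ℝ) (α : ℝ) : Set ℝ :=
  {r | ∃ g : Ω → ℝ, Measurable g ∧ (∀ ω, 0 ≤ g ω ∧ g ω ≤ 1 / α) ∧
    ∫ ω, g ω ∂μ = 1 ∧ r = ∫ ω, g ω * X ω ∂μ}

theorem integral_mul_le_of_sub_mul_sub_nonneg {f g : Ω → ℝ} (c : ℝ) (hf : Integrable f μ)
    (hg : Integrable g μ) (hfX : Integrable (fun ω => f ω * X ω) μ)
    (hgX : Integrable (fun ω => g ω * X ω) μ) (hfg : ∫ ω, f ω ∂μ = ∫ ω, g ω ∂μ)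
    (hpos : ∀ᵐ ω ∂μ, 0 ≤ (g ω - f ω) * (X ω - c)) :
    ∫ ω, f ω * X ω ∂μ ≤ ∫ ω, g ω * X ω ∂μ := by
  have hexpand : ∫ ω, (g ω - f ω) * (X ω - c) ∂μ =
      (∫ ω, g ω * X ω ∂μ - ∫ ω, f ω * X ω ∂μ) - c * (∫ ω, g ω ∂μ - ∫ ω, f ω ∂μ) := by
    simp_rw [mul_sub, sub_mul, mul_comm _ c]
    rw [integral_sub (f := fun ω => g ω * X ω - f ω * X ω) (g := fun ω => c * g ω - c * f ω)
        (hgX.sub hfX) ((hg.const_mul c).sub (hf.const_mul c)),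
      integral_sub hgX hfX, integral_sub (hg.const_mul c) (hf.const_mul c),
      integral_const_mul, integral_const_mul]
  have := integral_nonneg_of_ae hpos
  rw [hexpand, hfg, sub_self, mul_zero, sub_zero, sub_nonneg] at this
  exact this

theorem integrable_and_integrable_mul_of_bounded [IsFiniteMeasure μ] (hX : Integrable X μ) {g : Ω → ℝ} {C : ℝ}
    (hg : Measurable g) (hgb : ∀ ω, 0 ≤ g ω ∧ g ω ≤ C) :
    Integrable g μ ∧ Integrable (fun ω => g ω * X ω) μ := by
  have hbound : ∀ᵐ ω ∂μ, ‖g ω‖ ≤ C := .of_forall fun ω => by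
    rw [Real.norm_of_nonneg (hgb ω).1]
    exact (hgb ω).2
  exact ⟨.of_bound hg.aestronglyMeasurable _ hbound,
    hX.bdd_mul hg.aestronglyMeasurable hbound⟩

theorem isLeast_cvarDualSet_of_measureReal_eq [IsFiniteMeasure μ] (hXm : Measurable X)
    (hX : Integrable X μ) {α c : ℝ} (hα : 0 < α) (hc : μ.real {ω | X ω ≤ c} = α) :
    IsLeast (cvarDualSet μ X α) (1 / α * ∫ ω in {ω | X ω ≤ c}, X ω ∂μ) := by
  set A := {ω | X ω ≤ c}
  have hA : MeasurableSet A := hXm measurableSet_Iic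
  set g₀ : Ω → ℝ := A.indicator fun _ => 1 / α
  have hg₀m : Measurable g₀ := measurable_const.indicator hA
  have hg₀b : ∀ ω, 0 ≤ g₀ ω ∧ g₀ ω ≤ 1 / α := fun ω => by
    by_cases hω : ω ∈ A <;> simp [g₀, hω, hα.le]
  have hg₀1 : ∫ ω, g₀ ω ∂μ = 1 := by
    rw [integral_indicator_const _ hA, hc, smul_eq_mul, mul_one_div_cancel hα.ne']
  have hg₀X : ∫ ω, g₀ ω * X ω ∂μ = 1 / α * ∫ ω in A, X ω ∂μ := by
    simp_rw [g₀, ← indicator_mul_left]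
    rw [integral_indicator hA, integral_const_mul]
  refine ⟨⟨g₀, hg₀m, hg₀b, hg₀1, hg₀X.symm⟩, ?_⟩
  rintro r ⟨g, hgm, hgb, hg1, rfl⟩
  obtain ⟨hg₀i, hg₀Xi⟩ := integrable_and_integrable_mul_of_bounded hX hg₀m hg₀b
  obtain ⟨hgi, hgXi⟩ := integrable_and_integrable_mul_of_bounded hX hgm hgb
  rw [← hg₀X]
  -- `g₀` is maximal below the threshold `c` and vanishes above it.
  refine integral_mul_le_of_sub_mul_sub_nonneg c hg₀i hgi hg₀Xi hgXi (hg₀1.trans hg1.symm)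
    (.of_forall fun ω => ?_)
  by_cases hω : X ω ≤ c
  · have : g ω - g₀ ω ≤ 0 := by simpa [g₀, A, hω] using (hgb ω).2
    exact mul_nonneg_of_nonpos_of_nonpos this (sub_nonpos.mpr hω)
  · have : 0 ≤ g ω - g₀ ω := by simpa [g₀, A, hω] using (hgb ω).1
    exact mul_nonneg this (sub_nonneg.mpr (not_le.mp hω).le)

theorem isLeast_cvarDualSet_one [IsProbabilityMeasure μ] (hX : Integrable X μ) :
    IsLeast (cvarDualSet μ X 1) (∫ ω, X ω ∂μ) := by
  refine ⟨⟨fun _ => 1, measurable_const, fun _ => by norm_num, by simp, by simp⟩, ?_⟩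
  rintro r ⟨g, hgm, hgb, hg1, rfl⟩
  have hgi := (integrable_and_integrable_mul_of_bounded hX hgm hgb).1
  have hg_eq : g =ᵐ[μ] fun _ => 1 := by
    refine (integral_eq_iff_of_ae_le hgi (integrable_const 1)
      (.of_forall fun ω => by simpa using (hgb ω).2)).mp ?_
    rw [hg1, integral_const, probReal_univ, smul_eq_mul, mul_one]
  refine (integral_congr_ae ?_).le
  filter_upwards [hg_eq] with ω hω
  simp [hω]

end Dual

theorem cvar_dual_representation {Ω : Type*} [MeasurableSpace Ω] (μ : Measure Ω)
    [IsProbabilityMeasure μ] (X : Ω → ℝ) (hXm : Measurable X) (hX : Integrable X μ)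
    (hcont : Continuous (fun x => (μ {ω | X ω ≤ x}).toReal))
    (hsm : StrictMono (fun x => (μ {ω | X ω ≤ x}).toReal))
    (α : ℝ) (hα : α ∈ Set.Ioc (0:ℝ) 1) :
    (1/α) * ∫ τ in Set.Ioc 0 α, quantile μ X τ =
      sInf {r : ℝ | ∃ g : Ω → ℝ, Measurable g ∧ (∀ ω, 0 ≤ g ω ∧ g ω ≤ 1/α) ∧
        (∫ ω, g ω ∂μ) = 1 ∧ r = ∫ ω, g ω * X ω ∂μ} := by
  obtain ⟨hα0, hα1⟩ := hα
  have hF : ⇑(cdf (μ.map X)) = fun x => (μ {ω | X ω ≤ x}).toReal :=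
    funext (cdf_map_eq_toReal hXm.aemeasurable)
  rw [← hF] at hcont hsm
  have := Measure.isProbabilityMeasure_map (μ := μ) hXm.aemeasurable
  change _ = sInf (cvarDualSet μ X α)
  rw [setIntegral_Ioc_quantile hXm hcont hsm hα1]
  rcases hα1.lt_or_eq with hα1 | rfl
  · obtain ⟨c, rfl⟩ := exists_cdf_eq_of_continuous hcont ⟨hα0, hα1⟩
    have hpre : X ⁻¹' {x | cdf (μ.map X) x ≤ cdf (μ.map X) c} = {ω | X ω ≤ c} := by
      ext ω
      exact hsm.le_iff_le
    rw [hpre, (isLeast_cvarDualSet_of_measureReal_eq hXm hX hα0 _).csInf_eq]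
    rw [hF, measureReal_def]
  · have hpre : X ⁻¹' {x | cdf (μ.map X) x ≤ 1} = univ :=
      eq_univ_of_forall fun ω => cdf_le_one _ (X ω)
    rw [hpre, setIntegral_univ, (isLeast_cvarDualSet_one hX).csInf_eq, div_one, one_mul]
end
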